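/- Let f : 𝔻 → 𝔻 be analytic. If there exists a constant c ∈ (0,1) such that sup{D_h(f)(z) : z ∈ 𝔻, |f(z)| ≥ c} < 1, then sup{D_h(f)(z) : z ∈ 𝔻} < 1. -/

import Mathlib

open MeasureTheory Complex Set Metric Filter
open scoped ENNReal NNReal Topology

noncomputable section

/-- The hyperbolic derivative of an analytic self-map of the unit disc. -/
def hypDeriv (f : ℂ → ℂ) (z : ℂ) : ℝ :=
  (1 - ‖z‖ ^ 2) * ‖deriv f z‖ / (1 - ‖f z‖ ^ 2)

/-- A self-map of the disc is contractive if its hyperbolic derivative is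
uniformly bounded by a constant smaller than one. -/
def ContractiveMap (f : ℂ → ℂ) : Prop :=
  ∃ D < (1 : ℝ), ∀ z ∈ ball (0 : ℂ) 1, hypDeriv f z ≤ D

/-- The closed arc of the unit circle with center `ξ` and normalized length `t`
(arclength `2 π t`). -/
def bdryArc (ξ : ℂ) (t : ℝ) : Set ℂ :=
  {η : ℂ | ∃ θ : ℝ, |θ| ≤ Real.pi * t ∧ η = Complex.exp (θ * Complex.I) * ξ}

/-- The Carleson box over the arc with center `ξ` and normalized length `t`. -/
def carlesonBox (ξ : ℂ) (t : ℝ) : Set ℂ :=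
  {z : ℂ | z ∈ ball (0 : ℂ) 1 ∧ 1 - ‖z‖ ≤ t ∧ z ≠ 0 ∧ (‖z‖ : ℂ)⁻¹ * z ∈ bdryArc ξ t}

/-- Normalized arclength measure on the unit circle (total mass 1). -/
def circleM : Measure ℂ :=
  Measure.map (fun θ : ℝ => Complex.exp (2 * Real.pi * θ * Complex.I))
    (volume.restrict (Ioc (0 : ℝ) 1))

/-- Normalized area measure on the unit disc (total mass 1). -/
def discM : Measure ℂ :=
  (ENNReal.ofReal Real.pi)⁻¹ • volume.restrict (ball (0 : ℂ) 1)

/-- Poisson integral of a measure on the unit circle. -/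
def poissonInt (σ : Measure ℂ) (z : ℂ) : ℝ :=
  ∫ ξ, (1 - ‖z‖ ^ 2) / ‖ξ - z‖ ^ 2 ∂σ

/-- Hyperbolic distance on the unit disc. -/
def hypDist (z w : ℂ) : ℝ :=
  (1 / 2) * Real.log ((1 + ‖(z - w) / (1 - (starRingEnd ℂ) w * z)‖) /
    (1 - ‖(z - w) / (1 - (starRingEnd ℂ) w * z)‖))

/-- `u` is harmonic on the unit disc: twice continuously differentiable with
vanishing Laplacian. -/
def HarmonicOnDisc (u : ℂ → ℝ) : Prop :=
  ContDiffOn ℝ 2 u (ball (0 : ℂ) 1) ∧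
    ∀ z ∈ ball (0 : ℂ) 1,
      fderiv ℝ (fun w => fderiv ℝ u w 1) z 1 +
        fderiv ℝ (fun w => fderiv ℝ u w Complex.I) z Complex.I = 0

/-- An inner function: a bounded analytic self-map of the disc whose radial limits
have modulus one almost everywhere on the circle. -/
def InnerFunction (f : ℂ → ℂ) : Prop :=
  DifferentiableOn ℂ f (ball (0 : ℂ) 1) ∧
    (∀ z ∈ ball (0 : ℂ) 1, f z ∈ ball (0 : ℂ) 1) ∧
    ∀ᵐ ξ ∂circleM, ∃ L : ℂ, ‖L‖ = 1 ∧
      Tendsto (fun r : ℝ => f ((r : ℂ) * ξ)) (nhdsWithin 1 (Iio 1)) (nhds L)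

/-- The set of boundary points whose radial limit under `f` exists and lies in `E`. -/
def radialPreimage (f : ℂ → ℂ) (E : Set ℂ) : Set ℂ :=
  {ξ : ℂ | ‖ξ‖ = 1 ∧ ∃ L ∈ E,
    Tendsto (fun r : ℝ => f ((r : ℂ) * ξ)) (nhdsWithin 1 (Iio 1)) (nhds L)}

/-- Harmonic measure of `E ⊆ ∂𝔻` from the point `z ∈ 𝔻`. -/
def harmonicMeas (z : ℂ) (E : Set ℂ) : ℝ :=
  ∫ ξ in E, (1 - ‖z‖ ^ 2) / ‖ξ - z‖ ^ 2 ∂circleM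

/-- Poisson integral of a positive measure on the closed unit disc. -/
def poissonMu (μ : Measure ℂ) (z : ℂ) : ℝ≥0∞ :=
  ∫⁻ w, ENNReal.ofReal ((1 - ‖z‖ ^ 2) / ‖1 - (starRingEnd ℂ) w * z‖ ^ 2) ∂μ

/-- The measure `Σ_{f(w)=0} m_w (1-|w|²) δ_w` over the zeros of `f` in the disc,
with multiplicities given by `ord`. -/
def zeroMassMeasure (f : ℂ → ℂ) (ord : ℂ → ℕ) : Measure ℂ :=
  Measure.sum (fun w : {w : ℂ // w ∈ ball (0 : ℂ) 1 ∧ f w = 0} =>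
    ((ord (w : ℂ) : ℝ≥0∞) * ENNReal.ofReal (1 - ‖(w : ℂ)‖ ^ 2)) • Measure.dirac (w : ℂ))

/-- The dyadic subarc of generation `p.1` and index `p.2` of the (half-open) arc
with center `ξ` and normalized length `t`, obtained by repeated bisection. -/
def dyadicArc (ξ : ℂ) (t : ℝ) (p : ℕ × ℕ) : Set ℂ :=
  {η : ℂ | ∃ θ : ℝ,
    -(Real.pi * t) + 2 * Real.pi * t * p.2 / 2 ^ p.1 ≤ θ ∧
    θ < -(Real.pi * t) + 2 * Real.pi * t * (p.2 + 1) / 2 ^ p.1 ∧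
    η = Complex.exp (θ * Complex.I) * ξ}

/-!
Normalize `f` at a point `z` with `|f z| < c` by disc automorphisms to a self-map `g` with
`g 0 = 0` and `|g' 0| = D_h f (z)`; hyperbolic derivatives are invariant under this. Schwarz–Pick
for `ψ = g w / w` at a fixed `w = ρ`, with `m = |ψ ρ|`, gives `D_h f (z) ≤ m ⊕ ρ` and
`m ≤ D_h f (z₁) ⊕ ρ` for `z₁ = mob z ρ`, where `x ⊕ y = (x + y) / (1 + x y)`.
If `|f z₁| ≥ c` then `D_h f (z₁) ≤ D` bounds `m` away from `1`; otherwise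
`ρ m = |g ρ| ≤ |f z| ⊕ |f z₁| ≤ c ⊕ c`, which does the same once `ρ > c ⊕ c`.
-/

open ComplexConjugate

/-- Einstein addition: `tanh (s + t) = hypAdd (tanh s) (tanh t)`. -/
def hypAdd (x y : ℝ) : ℝ := (x + y) / (1 + x * y)

section HypAdd

variable {x x' y : ℝ}

lemma hypAdd_comm (x y : ℝ) : hypAdd x y = hypAdd y x := by
  rw [hypAdd, hypAdd, add_comm, mul_comm]

lemma hypAdd_nonneg (hx : 0 ≤ x) (hy : 0 ≤ y) : 0 ≤ hypAdd x y := by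
  unfold hypAdd; positivity

lemma hypAdd_lt_one (hx0 : 0 ≤ x) (hx1 : x < 1) (hy0 : 0 ≤ y) (hy1 : y < 1) :
    hypAdd x y < 1 := by
  rw [hypAdd, div_lt_one (by positivity)]
  nlinarith [mul_pos (sub_pos.2 hx1) (sub_pos.2 hy1)]

lemma hypAdd_le_hypAdd_left (hx : 0 ≤ x) (hxx' : x ≤ x') (hy0 : 0 ≤ y) (hy1 : y ≤ 1) :
    hypAdd x y ≤ hypAdd x' y := by
  rw [hypAdd, hypAdd, div_le_div_iff₀ (by positivity) (by nlinarith)]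
  nlinarith [mul_nonneg (sub_nonneg.2 hxx')
    (mul_nonneg (sub_nonneg.2 hy1) (by linarith : 0 ≤ 1 + y))]

lemma le_hypAdd_iff {m : ℝ} (hx : 0 ≤ x) (hy : 0 ≤ y) :
    m ≤ hypAdd x y ↔ m - y ≤ x * (1 - y * m) := by
  rw [hypAdd, le_div_iff₀ (by positivity)]
  constructor <;> intro H <;> linarith

end HypAdd

def mob (a z : ℂ) : ℂ := (a - z) / (1 - conj a * z)

section Mob

variable {a z : ℂ}

lemma one_sub_conj_mul_ne_zero (ha : ‖a‖ < 1) (hz : ‖z‖ ≤ 1) : 1 - conj a * z ≠ 0 := by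
  intro h
  have : ‖conj a * z‖ < 1 := by
    rw [norm_mul, RCLike.norm_conj]
    nlinarith [norm_nonneg a, norm_nonneg z]
  rw [← sub_eq_zero.1 h, norm_one] at this
  exact this.false

lemma norm_one_sub_conj_mul_sq_sub_norm_sub_sq (a z : ℂ) :
    ‖1 - conj a * z‖ ^ 2 - ‖a - z‖ ^ 2 = (1 - ‖a‖ ^ 2) * (1 - ‖z‖ ^ 2) := by
  simp only [← normSq_eq_norm_sq, normSq_apply, sub_re, sub_im, mul_re, mul_im, one_re, one_im,
    conj_re, conj_im]
  ring

lemma one_sub_norm_mob_sq (ha : ‖a‖ < 1) (hz : ‖z‖ < 1) :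
    1 - ‖mob a z‖ ^ 2 = (1 - ‖a‖ ^ 2) * (1 - ‖z‖ ^ 2) / ‖1 - conj a * z‖ ^ 2 := by
  have hd : 0 < ‖1 - conj a * z‖ := norm_pos_iff.2 (one_sub_conj_mul_ne_zero ha hz.le)
  rw [mob, norm_div, div_pow, eq_div_iff (by positivity), sub_mul, one_mul,
    div_mul_cancel₀ _ (by positivity), ← norm_one_sub_conj_mul_sq_sub_norm_sub_sq]

lemma norm_mob_lt_one (ha : ‖a‖ < 1) (hz : ‖z‖ < 1) : ‖mob a z‖ < 1 := by
  have h : 0 < 1 - ‖mob a z‖ ^ 2 := by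
    rw [one_sub_norm_mob_sq ha hz]
    have := one_sub_conj_mul_ne_zero ha hz.le
    have : 0 < 1 - ‖a‖ ^ 2 := by nlinarith [norm_nonneg a]
    have : 0 < 1 - ‖z‖ ^ 2 := by nlinarith [norm_nonneg z]
    positivity
  nlinarith [norm_nonneg (mob a z)]

lemma mapsTo_mob (ha : ‖a‖ < 1) : MapsTo (mob a) (ball 0 1) (ball 0 1) := fun z hz => by
  rw [mem_ball_zero_iff] at hz ⊢
  exact norm_mob_lt_one ha hz

@[simp] lemma mob_zero (a : ℂ) : mob a 0 = a := by simp [mob]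

@[simp] lemma mob_self (a : ℂ) : mob a a = 0 := by simp [mob]

lemma mob_mob (ha : ‖a‖ < 1) (hz : ‖z‖ < 1) : mob a (mob a z) = z := by
  have hz' := one_sub_conj_mul_ne_zero ha hz.le
  have ha' := one_sub_conj_mul_ne_zero ha ha.le
  have hden : 1 - conj a * mob a z = (1 - conj a * a) / (1 - conj a * z) := by
    rw [mob]; field_simp; ring
  have hnum : a - mob a z = z * (1 - conj a * a) / (1 - conj a * z) := by
    rw [mob, eq_div_iff hz', sub_mul, div_mul_cancel₀ _ hz']; ring
  rw [mob, hden, hnum, div_div_div_cancel_right₀ hz', mul_div_cancel_right₀ z ha']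

lemma hasDerivAt_mob (ha : ‖a‖ < 1) (hz : ‖z‖ < 1) :
    HasDerivAt (mob a) ((conj a * a - 1) / (1 - conj a * z) ^ 2) z := by
  have hd := one_sub_conj_mul_ne_zero ha hz.le
  have := ((hasDerivAt_id z).const_sub a).div
    (((hasDerivAt_id z).const_mul (conj a)).const_sub 1) hd
  exact this.congr_deriv (by simp only [id]; ring)

lemma differentiableOn_mob (ha : ‖a‖ < 1) : DifferentiableOn ℂ (mob a) (ball 0 1) :=
  fun _ hz => (hasDerivAt_mob ha (mem_ball_zero_iff.1 hz)).differentiableAt.differentiableWithinAt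

/-- `mob a` is an isometry of the hyperbolic metric `|dz| / (1 - |z|²)`. -/
lemma one_sub_sq_mul_norm_deriv_mob (ha : ‖a‖ < 1) (hz : ‖z‖ < 1) :
    (1 - ‖z‖ ^ 2) * ‖deriv (mob a) z‖ = 1 - ‖mob a z‖ ^ 2 := by
  have hd : 0 < ‖1 - conj a * z‖ := norm_pos_iff.2 (one_sub_conj_mul_ne_zero ha hz.le)
  have hconj : conj a * a - 1 = ((‖a‖ ^ 2 - 1 : ℝ) : ℂ) := by
    rw [conj_mul']; push_cast; ring
  rw [(hasDerivAt_mob ha hz).deriv, one_sub_norm_mob_sq ha hz, norm_div, norm_pow, hconj,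
    norm_real, Real.norm_eq_abs, abs_of_nonpos (by nlinarith [norm_nonneg a])]
  ring

lemma norm_mob_le_hypAdd (ha : ‖a‖ < 1) (hz : ‖z‖ < 1) :
    ‖mob a z‖ ≤ hypAdd ‖a‖ ‖z‖ := by
  have ha0 := norm_nonneg a
  have hz0 := norm_nonneg z
  have hd : ‖1 - conj a * z‖ ≤ 1 + ‖a‖ * ‖z‖ := by
    simpa [norm_mul] using norm_sub_le (1 : ℂ) (conj a * z)
  have hd0 : 0 < ‖1 - conj a * z‖ := norm_pos_iff.2 (one_sub_conj_mul_ne_zero ha hz.le)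
  have key : 1 - hypAdd ‖a‖ ‖z‖ ^ 2 ≤ 1 - ‖mob a z‖ ^ 2 := by
    rw [one_sub_norm_mob_sq ha hz, hypAdd, div_pow,
      show 1 - (‖a‖ + ‖z‖) ^ 2 / (1 + ‖a‖ * ‖z‖) ^ 2
        = (1 - ‖a‖ ^ 2) * (1 - ‖z‖ ^ 2) / (1 + ‖a‖ * ‖z‖) ^ 2 by field_simp; ring]
    gcongr
    exact mul_nonneg (by nlinarith) (by nlinarith)
  nlinarith [hypAdd_nonneg ha0 hz0, norm_nonneg (mob a z)]

end Mob

section HypDeriv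

variable {f : ℂ → ℂ} {a z w : ℂ}

lemma hypDeriv_nonneg (hz : ‖z‖ ≤ 1) (hfz : ‖f z‖ ≤ 1) : 0 ≤ hypDeriv f z := by
  unfold hypDeriv
  have : 0 ≤ 1 - ‖z‖ ^ 2 := by nlinarith [norm_nonneg z]
  have : 0 ≤ 1 - ‖f z‖ ^ 2 := by nlinarith [norm_nonneg (f z)]
  positivity

lemma hypDeriv_mob_comp (ha : ‖a‖ < 1) (hf : DifferentiableAt ℂ f z) (hfz : ‖f z‖ < 1) :
    hypDeriv (mob a ∘ f) z = hypDeriv f z := by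
  have hiso := one_sub_sq_mul_norm_deriv_mob ha hfz
  have hpos : 0 < 1 - ‖mob a (f z)‖ ^ 2 := by
    nlinarith [norm_mob_lt_one ha hfz, norm_nonneg (mob a (f z))]
  have hderiv : ‖deriv (mob a) (f z)‖ ≠ 0 := by
    rintro h
    rw [h, mul_zero] at hiso
    exact hpos.ne hiso
  rw [hypDeriv, hypDeriv, Function.comp_apply,
    deriv_comp z (hasDerivAt_mob ha hfz).differentiableAt hf, norm_mul, ← hiso]
  field_simp

lemma hypDeriv_comp_mob (ha : ‖a‖ < 1) (hz : ‖z‖ < 1)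
    (hf : DifferentiableAt ℂ f (mob a z)) :
    hypDeriv (f ∘ mob a) z = hypDeriv f (mob a z) := by
  rw [hypDeriv, hypDeriv, Function.comp_apply,
    deriv_comp z hf (hasDerivAt_mob ha hz).differentiableAt, norm_mul,
    ← one_sub_sq_mul_norm_deriv_mob ha hz]
  ring

def recenter (f : ℂ → ℂ) (z : ℂ) : ℂ → ℂ := mob (f z) ∘ f ∘ mob z

@[simp] lemma recenter_zero (f : ℂ → ℂ) (z : ℂ) : recenter f z 0 = 0 := by
  simp [recenter]

lemma mapsTo_recenter (hmap : MapsTo f (ball 0 1) (ball 0 1)) (hz : z ∈ ball (0 : ℂ) 1) :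
    MapsTo (recenter f z) (ball 0 1) (ball 0 1) :=
  (mapsTo_mob (mem_ball_zero_iff.1 (hmap hz))).comp
    (hmap.comp (mapsTo_mob (mem_ball_zero_iff.1 hz)))

lemma differentiableOn_recenter (hf : DifferentiableOn ℂ f (ball 0 1))
    (hmap : MapsTo f (ball 0 1) (ball 0 1)) (hz : z ∈ ball (0 : ℂ) 1) :
    DifferentiableOn ℂ (recenter f z) (ball 0 1) :=
  (differentiableOn_mob (mem_ball_zero_iff.1 (hmap hz))).comp
    (hf.comp (differentiableOn_mob (mem_ball_zero_iff.1 hz)) (mapsTo_mob (mem_ball_zero_iff.1 hz)))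
    (hmap.comp (mapsTo_mob (mem_ball_zero_iff.1 hz)))

lemma hypDeriv_recenter (hf : DifferentiableOn ℂ f (ball 0 1))
    (hmap : MapsTo f (ball 0 1) (ball 0 1)) (hz : z ∈ ball (0 : ℂ) 1)
    (hw : w ∈ ball (0 : ℂ) 1) :
    hypDeriv (recenter f z) w = hypDeriv f (mob z w) := by
  have hz' := mem_ball_zero_iff.1 hz
  have hzw : mob z w ∈ ball (0 : ℂ) 1 := mapsTo_mob hz' hw
  have hfd : DifferentiableAt ℂ f (mob z w) := hf.differentiableAt (isOpen_ball.mem_nhds hzw)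
  rw [recenter, hypDeriv_mob_comp (mem_ball_zero_iff.1 (hmap hz))
      (hfd.comp w (hasDerivAt_mob hz' (mem_ball_zero_iff.1 hw)).differentiableAt)
      (mem_ball_zero_iff.1 (hmap hzw)),
    hypDeriv_comp_mob hz' (mem_ball_zero_iff.1 hw) hfd]

lemma norm_deriv_recenter_zero (hf : DifferentiableOn ℂ f (ball 0 1))
    (hmap : MapsTo f (ball 0 1) (ball 0 1)) (hz : z ∈ ball (0 : ℂ) 1) :
    ‖deriv (recenter f z) 0‖ = hypDeriv f z := by
  simpa [hypDeriv] using hypDeriv_recenter hf hmap hz (mem_ball_self one_pos)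

end HypDeriv

section SchwarzPick

variable {f : ℂ → ℂ} {w : ℂ}

lemma one_sub_sq_mul_norm_deriv_le (hf : DifferentiableOn ℂ f (ball 0 1))
    (hmap : MapsTo f (ball 0 1) (ball 0 1)) (hw : w ∈ ball (0 : ℂ) 1) :
    (1 - ‖w‖ ^ 2) * ‖deriv f w‖ ≤ 1 - ‖f w‖ ^ 2 := by
  have hle : hypDeriv f w ≤ 1 := by
    rw [← norm_deriv_recenter_zero hf hmap hw]
    refine norm_deriv_le_one_of_mapsTo_ball (differentiableOn_recenter hf hmap hw) ?_ one_pos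
    simpa using (mapsTo_recenter hmap hw).mono_right ball_subset_closedBall
  have hfw := mem_ball_zero_iff.1 (hmap hw)
  rwa [hypDeriv, div_le_one (by nlinarith [norm_nonneg (f w)])] at hle

lemma norm_apply_zero_le_hypAdd (hf : DifferentiableOn ℂ f (ball 0 1))
    (hmap : MapsTo f (ball 0 1) (ball 0 1)) (hw : w ∈ ball (0 : ℂ) 1) :
    ‖f 0‖ ≤ hypAdd ‖f w‖ ‖w‖ := by
  have hw' := mem_ball_zero_iff.1 hw
  have hfw := mem_ball_zero_iff.1 (hmap hw)
  have hf0 := mem_ball_zero_iff.1 (hmap (mem_ball_self one_pos))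
  have hdist : ‖mob (f w) (f 0)‖ ≤ ‖w‖ := by
    simpa [recenter] using norm_le_norm_of_mapsTo_ball (differentiableOn_recenter hf hmap hw)
      ((mapsTo_recenter hmap hw).mono_right ball_subset_closedBall) (recenter_zero f w) hw'
  calc ‖f 0‖ = ‖mob (f w) (mob (f w) (f 0))‖ := by rw [mob_mob hfw hf0]
    _ ≤ hypAdd ‖f w‖ ‖mob (f w) (f 0)‖ := norm_mob_le_hypAdd hfw (norm_mob_lt_one hfw hf0)
    _ ≤ hypAdd ‖f w‖ ‖w‖ := by
      rw [hypAdd_comm, hypAdd_comm _ ‖w‖]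
      exact hypAdd_le_hypAdd_left (norm_nonneg _) hdist (norm_nonneg _) hfw.le

lemma mapsTo_ball_or_eqOn_const (hf : DifferentiableOn ℂ f (ball 0 1))
    (hmap : MapsTo f (ball 0 1) (closedBall 0 1)) :
    MapsTo f (ball 0 1) (ball 0 1) ∨
      ∃ ζ : ℂ, ‖ζ‖ = 1 ∧ EqOn f (fun _ => ζ) (ball 0 1) := by
  by_cases hball : MapsTo f (ball 0 1) (ball 0 1)
  · exact .inl hball
  obtain ⟨u, hu, hfu⟩ := not_forall₂.1 hball
  have hnorm : ‖f u‖ = 1 :=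
    le_antisymm (mem_closedBall_zero_iff.1 (hmap hu)) (not_lt.1 (mt mem_ball_zero_iff.2 hfu))
  have hmax : IsMaxOn (norm ∘ f) (ball 0 1) u := fun v hv => by
    simpa [hnorm] using mem_closedBall_zero_iff.1 (hmap hv)
  exact .inr ⟨f u, hnorm, Complex.eqOn_of_isPreconnected_of_isMaxOn_norm
    (convex_ball 0 1).isPreconnected isOpen_ball hf hu hmax⟩

lemma norm_apply_zero_le_hypAdd_of_mapsTo_closedBall (hf : DifferentiableOn ℂ f (ball 0 1))
    (hmap : MapsTo f (ball 0 1) (closedBall 0 1)) (hw : w ∈ ball (0 : ℂ) 1) :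
    ‖f 0‖ ≤ hypAdd ‖f w‖ ‖w‖ := by
  rcases mapsTo_ball_or_eqOn_const hf hmap with hball | ⟨ζ, hζ, hconst⟩
  · exact norm_apply_zero_le_hypAdd hf hball hw
  · rw [hconst (mem_ball_self one_pos), hconst hw, hζ, hypAdd, one_mul,
      div_self (by positivity)]

lemma one_sub_sq_mul_norm_deriv_le_of_mapsTo_closedBall (hf : DifferentiableOn ℂ f (ball 0 1))
    (hmap : MapsTo f (ball 0 1) (closedBall 0 1)) (hw : w ∈ ball (0 : ℂ) 1) :
    (1 - ‖w‖ ^ 2) * ‖deriv f w‖ ≤ 1 - ‖f w‖ ^ 2 := by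
  rcases mapsTo_ball_or_eqOn_const hf hmap with hball | ⟨ζ, hζ, hconst⟩
  · exact one_sub_sq_mul_norm_deriv_le hf hball hw
  · rw [(Filter.eventuallyEq_of_mem (isOpen_ball.mem_nhds hw) hconst).deriv_eq, hconst hw, hζ]
    simp

end SchwarzPick

section Dslope

variable {g : ℂ → ℂ} {w : ℂ}

lemma norm_eq_norm_mul_norm_dslope (hg0 : g 0 = 0) (w : ℂ) :
    ‖g w‖ = ‖w‖ * ‖dslope g 0 w‖ := by
  simpa [hg0, norm_smul] using congrArg norm (sub_smul_dslope g 0 w).symm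

lemma mapsTo_dslope_zero (hg : DifferentiableOn ℂ g (ball 0 1))
    (hgm : MapsTo g (ball 0 1) (ball 0 1)) (hg0 : g 0 = 0) :
    MapsTo (dslope g 0) (ball 0 1) (closedBall 0 1) := fun _ hu => by
  simpa using norm_dslope_le_div_of_mapsTo_ball hg
    (by simpa [hg0] using hgm.mono_right ball_subset_closedBall) hu

lemma differentiableOn_dslope_zero (hg : DifferentiableOn ℂ g (ball 0 1)) :
    DifferentiableOn ℂ (dslope g 0) (ball 0 1) :=
  (differentiableOn_dslope (isOpen_ball.mem_nhds (mem_ball_self one_pos))).2 hg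

lemma norm_deriv_zero_le_hypAdd (hg : DifferentiableOn ℂ g (ball 0 1))
    (hgm : MapsTo g (ball 0 1) (ball 0 1)) (hg0 : g 0 = 0) (hw : w ∈ ball (0 : ℂ) 1) :
    ‖deriv g 0‖ ≤ hypAdd ‖dslope g 0 w‖ ‖w‖ := by
  simpa using norm_apply_zero_le_hypAdd_of_mapsTo_closedBall (differentiableOn_dslope_zero hg)
    (mapsTo_dslope_zero hg hgm hg0) hw

lemma norm_dslope_le_hypAdd_hypDeriv (hg : DifferentiableOn ℂ g (ball 0 1))
    (hgm : MapsTo g (ball 0 1) (ball 0 1)) (hg0 : g 0 = 0) (hw : w ∈ ball (0 : ℂ) 1) :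
    ‖dslope g 0 w‖ ≤ hypAdd (hypDeriv g w) ‖w‖ := by
  set ψ := dslope g 0
  set m := ‖ψ w‖
  set ρ := ‖w‖ with hρ
  have hρ1 : ρ < 1 := mem_ball_zero_iff.1 hw
  have hm1 : m ≤ 1 := mem_closedBall_zero_iff.1 (mapsTo_dslope_zero hg hgm hg0 hw)
  have hgw : ‖g w‖ = ρ * m := norm_eq_norm_mul_norm_dslope hg0 w
  have hψd := differentiableOn_dslope_zero hg
  have hderiv : deriv g w = ψ w + w * deriv ψ w := by
    have hgψ : g = fun u => u * ψ u := funext fun u => by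
      simpa [hg0] using (sub_smul_dslope g 0 u).symm
    rw [hgψ, ((hasDerivAt_id' w).fun_mul
      (hψd.differentiableAt (isOpen_ball.mem_nhds hw)).hasDerivAt).deriv, one_mul]
  have hψ' : (1 - ρ ^ 2) * ‖deriv ψ w‖ ≤ 1 - m ^ 2 :=
    one_sub_sq_mul_norm_deriv_le_of_mapsTo_closedBall hψd (mapsTo_dslope_zero hg hgm hg0) hw
  have hQ : m - ρ * ‖deriv ψ w‖ ≤ ‖deriv g w‖ := by
    have := norm_sub_norm_le (ψ w) (-(w * deriv ψ w))
    rw [norm_neg, norm_mul, sub_neg_eq_add, ← hderiv] at this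
    linarith
  have hρm0 : 0 ≤ ρ * m := by positivity
  have hρm : ρ * m < 1 := by nlinarith [norm_nonneg w]
  have hH : hypDeriv g w * (1 - ρ * m) * (1 + ρ * m) = (1 - ρ ^ 2) * ‖deriv g w‖ := by
    rw [hypDeriv, hgw, ← hρ]
    field_simp [show 1 - ρ ^ 2 * m ^ 2 ≠ 0 by nlinarith]
    ring
  have hρ2 : 0 ≤ 1 - ρ ^ 2 := by nlinarith [norm_nonneg w]
  rw [le_hypAdd_iff (hypDeriv_nonneg hρ1.le (by rw [hgw]; exact hρm.le)) (norm_nonneg w)]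
  refine le_of_mul_le_mul_right ?_ (by positivity : 0 < 1 + ρ * m)
  calc (m - ρ) * (1 + ρ * m) = (1 - ρ ^ 2) * m - ρ * (1 - m ^ 2) := by ring
    _ ≤ (1 - ρ ^ 2) * (m - ρ * ‖deriv ψ w‖) := by nlinarith [norm_nonneg w]
    _ ≤ (1 - ρ ^ 2) * ‖deriv g w‖ := mul_le_mul_of_nonneg_left hQ hρ2
    _ = hypDeriv g w * (1 - ρ * m) * (1 + ρ * m) := hH.symm

end Dslope

lemma hypDeriv_le_of_norm_lt {f : ℂ → ℂ} {c E ρ : ℝ} {z : ℂ}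
    (hf : DifferentiableOn ℂ f (ball 0 1)) (hmap : MapsTo f (ball 0 1) (ball 0 1))
    (hc1 : c ≤ 1) (hE : ∀ z ∈ ball (0 : ℂ) 1, c ≤ ‖f z‖ → hypDeriv f z ≤ E)
    (hρ0 : 0 < ρ) (hρ1 : ρ < 1) (hz : z ∈ ball (0 : ℂ) 1) (hfz : ‖f z‖ < c) :
    hypDeriv f z ≤ hypAdd (max (hypAdd c c / ρ) (hypAdd E ρ)) ρ := by
  set g := recenter f z
  have hg := differentiableOn_recenter hf hmap hz
  have hgm := mapsTo_recenter hmap hz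
  have hw : (ρ : ℂ) ∈ ball (0 : ℂ) 1 := by simpa [abs_of_pos hρ0] using hρ1
  have hwn : ‖(ρ : ℂ)‖ = ρ := by simp [abs_of_pos hρ0]
  set m := ‖dslope g 0 ρ‖
  have hs : hypDeriv f z ≤ hypAdd m ρ := by
    simpa [← norm_deriv_recenter_zero hf hmap hz, abs_of_pos hρ0] using
      norm_deriv_zero_le_hypAdd hg hgm (recenter_zero f z) hw
  have hz₁ : mob z ρ ∈ ball (0 : ℂ) 1 := mapsTo_mob (mem_ball_zero_iff.1 hz) hw
  have hm : m ≤ max (hypAdd c c / ρ) (hypAdd E ρ) := by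
    by_cases hc : c ≤ ‖f (mob z ρ)‖
    · refine le_max_of_le_right ?_
      have hH0 : 0 ≤ hypDeriv f (mob z ρ) := hypDeriv_nonneg (mem_ball_zero_iff.1 hz₁).le
        (mem_ball_zero_iff.1 (hmap hz₁)).le
      calc m ≤ hypAdd (hypDeriv g ρ) ‖(ρ : ℂ)‖ :=
            norm_dslope_le_hypAdd_hypDeriv hg hgm (recenter_zero f z) hw
        _ = hypAdd (hypDeriv f (mob z ρ)) ρ := by rw [hypDeriv_recenter hf hmap hz hw, hwn]
        _ ≤ hypAdd E ρ := hypAdd_le_hypAdd_left hH0 (hE _ hz₁ hc) hρ0.le hρ1.le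
    · refine le_max_of_le_left ((le_div_iff₀' hρ0).2 ?_)
      have hfz₁ : ‖f (mob z ρ)‖ < c := not_le.1 hc
      have hc0 : 0 ≤ c := (norm_nonneg _).trans hfz.le
      calc ρ * m = ‖g ρ‖ := by rw [norm_eq_norm_mul_norm_dslope (recenter_zero f z), hwn]
        _ = ‖mob (f z) (f (mob z ρ))‖ := rfl
        _ ≤ hypAdd ‖f z‖ ‖f (mob z ρ)‖ :=
            norm_mob_le_hypAdd (mem_ball_zero_iff.1 (hmap hz)) (mem_ball_zero_iff.1 (hmap hz₁))
        _ ≤ hypAdd c ‖f (mob z ρ)‖ :=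
            hypAdd_le_hypAdd_left (norm_nonneg _) hfz.le (norm_nonneg _)
              (mem_ball_zero_iff.1 (hmap hz₁)).le
        _ ≤ hypAdd c c := by
            rw [hypAdd_comm, hypAdd_comm c c]
            exact hypAdd_le_hypAdd_left (norm_nonneg _) hfz₁.le hc0 hc1
  exact hs.trans (hypAdd_le_hypAdd_left (norm_nonneg _) hm hρ0.le hρ1.le)

/-- Lemma: it suffices to bound the hyperbolic derivative where `|f| ≥ c`. -/
theorem statement5
    (f : ℂ → ℂ) (hf : DifferentiableOn ℂ f (ball (0 : ℂ) 1))
    (hmap : ∀ z ∈ ball (0 : ℂ) 1, f z ∈ ball (0 : ℂ) 1)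
    (c : ℝ) (hc : c ∈ Ioo (0 : ℝ) 1)
    (h : ∃ D < (1 : ℝ), ∀ z ∈ ball (0 : ℂ) 1, c ≤ ‖f z‖ → hypDeriv f z ≤ D) :
    ContractiveMap f := by
  obtain ⟨D, hD1, hD⟩ := h
  obtain ⟨hc0, hc1⟩ := hc
  set E := max D 0
  have hE1 : E < 1 := max_lt hD1 one_pos
  have hE : ∀ z ∈ ball (0 : ℂ) 1, c ≤ ‖f z‖ → hypDeriv f z ≤ E := fun z hz hcz =>
    (hD z hz hcz).trans (le_max_left _ _)
  obtain ⟨ρ, hcρ, hρ1⟩ := exists_between (hypAdd_lt_one hc0.le hc1 hc0.le hc1)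
  have hρ0 : 0 < ρ := (hypAdd_nonneg hc0.le hc0.le).trans_lt hcρ
  set M := max (hypAdd c c / ρ) (hypAdd E ρ)
  have hM0 : 0 ≤ M := le_max_of_le_right (hypAdd_nonneg (le_max_right _ _) hρ0.le)
  have hM1 : M < 1 :=
    max_lt ((div_lt_one hρ0).2 hcρ) (hypAdd_lt_one (le_max_right _ _) hE1 hρ0.le hρ1)
  refine ⟨max E (hypAdd M ρ), max_lt hE1 (hypAdd_lt_one hM0 hM1 hρ0.le hρ1), fun z hz => ?_⟩
  by_cases hcz : c ≤ ‖f z‖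
  · exact (hE z hz hcz).trans (le_max_left _ _)
  · exact (hypDeriv_le_of_norm_lt hf hmap hc1.le hE hρ0 hρ1 hz (not_le.1 hcz)).trans
      (le_max_right _ _)

end
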